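/- arXiv:1612.05412 — 3 statements merged into one kernel-verified Lean document; each statement's English description precedes it below -/
import Mathlib

section
/- Let (X,p,E) be a p-semimonotone lattice-normed ordered vector space with p-closed positive cone that has the p-Levi property (every p-bounded increasing net in X⁺ is p-convergent). Then X is Dedekind complete: every net 0 ≤ x_α ↑ ≤ z in X has a supremum. -/
/-- A net `x : A → G` in an ordered additive group order-converges to `0`:
there exist two nonempty downward-directed sets `D₁, D₂` (the ranges of two
decreasing nets) with infimum `0` such that the net is eventually squeezed
between `-y` and `z` for all `y ∈ D₁`, `z ∈ D₂`. -/
def OConv0 {A G : Type} [Preorder A] [AddCommGroup G] [PartialOrder G]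
    (x : A → G) : Prop :=
  ∃ D₁ D₂ : Set G, D₁.Nonempty ∧ D₂.Nonempty ∧
    DirectedOn (· ≥ ·) D₁ ∧ DirectedOn (· ≥ ·) D₂ ∧
    IsGLB D₁ 0 ∧ IsGLB D₂ 0 ∧
    ∀ y ∈ D₁, ∀ z ∈ D₂, ∃ a₀ : A, ∀ a : A, a₀ ≤ a → -y ≤ x a ∧ x a ≤ z

/-- A net `x : A → X` p-converges to `l` if `p (x a - l)` order-converges to `0` in `E`. -/
def PConvTo {A X E : Type} [Preorder A] [AddCommGroup X]
    [AddCommGroup E] [PartialOrder E] (p : X → E) (x : A → X) (l : X) : Prop :=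
  OConv0 (fun a => p (x a - l))

/-- A net p-converges to `0`. -/
def PConv0 {A X E : Type} [Preorder A] [AddCommGroup X]
    [AddCommGroup E] [PartialOrder E] (p : X → E) (x : A → X) : Prop :=
  OConv0 (fun a => p (x a))

/-- A set `S ⊆ X` is p-closed: p-limits of nets in `S` belong to `S`. -/
def PClosed {X E : Type} [AddCommGroup X] [AddCommGroup E] [PartialOrder E]
    (p : X → E) (S : Set X) : Prop :=
  ∀ (A : Type) [Preorder A] [Nonempty A] [IsDirected A (· ≤ ·)]
    (a : A → X) (x : X), (∀ i, a i ∈ S) → PConvTo p a x → x ∈ S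

/-- A net is p-Cauchy if the double net `x α - x α'` p-converges to `0`. -/
def PCauchy {A X E : Type} [Preorder A] [AddCommGroup X]
    [AddCommGroup E] [PartialOrder E] (p : X → E) (x : A → X) : Prop :=
  OConv0 (fun q : A × A => p (x q.1 - x q.2))

/-- `X` is op-continuous: order convergence to `0` in `X` implies p-convergence to `0`. -/
def OpCont {X E : Type} [AddCommGroup X] [PartialOrder X]
    [AddCommGroup E] [PartialOrder E] (p : X → E) : Prop :=
  ∀ (A : Type) [Preorder A] [Nonempty A] [IsDirected A (· ≤ ·)] (x : A → X),
    OConv0 x → PConv0 p x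

/-- `X` is p-complete: every p-Cauchy net p-converges. -/
def PComplete {X E : Type} [AddCommGroup X]
    [AddCommGroup E] [PartialOrder E] (p : X → E) : Prop :=
  ∀ (A : Type) [Preorder A] [Nonempty A] [IsDirected A (· ≤ ·)] (x : A → X),
    PCauchy p x → ∃ l : X, PConvTo p x l

/-- `X` is a p-Levi space: every p-bounded increasing net in `X⁺` p-converges. -/
def PLevi {X E : Type} [AddCommGroup X] [PartialOrder X]
    [AddCommGroup E] [PartialOrder E] (p : X → E) : Prop :=
  ∀ (A : Type) [Preorder A] [Nonempty A] [IsDirected A (· ≤ ·)] (x : A → X),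
    (∀ a, 0 ≤ x a) → Monotone x → (∃ e : E, ∀ a, p (x a) ≤ e) →
    ∃ l : X, PConvTo p x l


/-!
Levi gives a p-limit `l` of the increasing net, which is p-bounded by `M • p z` through
semimonotonicity. Closedness of the positive cone lets order inequalities pass to p-limits:
`x a ≤ x b` for all `b ≥ a` yields `x a ≤ l`, and `x b ≤ u` for all `b` yields `l ≤ u`,
so `l` is the supremum.
-/

instance Set.Ici.isDirected_le {A : Type} [Preorder A] [IsDirected A (· ≤ ·)] (a : A) :
    IsDirected (Set.Ici a) (· ≤ ·) where
  directed b c :=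
    let ⟨d, hbd, hcd⟩ := directed_of (· ≤ ·) b.1 c.1
    ⟨⟨d, b.2.trans hbd⟩, hbd, hcd⟩

section OrderConvergence

variable {A G : Type} [Preorder A] [AddCommGroup G] [PartialOrder G] {x y : A → G}

theorem OConv0.congr (h : OConv0 x) (hxy : ∀ a, x a = y a) : OConv0 y :=
  funext hxy ▸ h

theorem OConv0.comp_Ici [IsDirected A (· ≤ ·)] (h : OConv0 x) (a : A) :
    OConv0 (fun b : Set.Ici a => x b) := by
  obtain ⟨D₁, D₂, h₁, h₂, h₃, h₄, h₅, h₆, hev⟩ := h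
  refine ⟨D₁, D₂, h₁, h₂, h₃, h₄, h₅, h₆, fun y hy z hz => ?_⟩
  obtain ⟨a₀, ha₀⟩ := hev y hy z hz
  obtain ⟨a₁, h₀₁, ha₁⟩ := directed_of (· ≤ ·) a₀ a
  exact ⟨⟨a₁, ha₁⟩, fun b hb => ha₀ b (h₀₁.trans hb)⟩

end OrderConvergence

section PConvergence

variable {A X E : Type} [Preorder A] [AddCommGroup X] [AddCommGroup E] [PartialOrder E]
  {p : X → E} {x : A → X} {l : X}

theorem PConvTo.comp_Ici [IsDirected A (· ≤ ·)] (h : PConvTo p x l) (a : A) :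
    PConvTo p (fun b : Set.Ici a => x b) l :=
  OConv0.comp_Ici h a

theorem PConvTo.sub_const (h : PConvTo p x l) (c : X) :
    PConvTo p (fun a => x a - c) (l - c) :=
  OConv0.congr h fun a => by rw [sub_sub_sub_cancel_right]

theorem PConvTo.const_sub (hp_neg : ∀ v, p (-v) = p v) (h : PConvTo p x l) (c : X) :
    PConvTo p (fun a => c - x a) (c - l) :=
  OConv0.congr h fun a => by rw [sub_sub_sub_cancel_left, ← neg_sub, hp_neg]

end PConvergence

namespace PClosed

variable {A X E : Type} [Preorder A] [IsDirected A (· ≤ ·)]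
  [AddCommGroup X] [PartialOrder X] [AddLeftMono X] [AddCommGroup E] [PartialOrder E]
  {p : X → E} {x : A → X} {l c : X}

theorem le_of_pConvTo [Nonempty A] (hclosed : PClosed p {x : X | 0 ≤ x}) (hc : ∀ a, c ≤ x a)
    (h : PConvTo p x l) : c ≤ l :=
  sub_nonneg.mp <| hclosed A _ _ (fun a => sub_nonneg.mpr (hc a)) (h.sub_const c)

theorem le_of_pConvTo_of_eventually (hclosed : PClosed p {x : X | 0 ≤ x})
    (hc : ∃ a₀, ∀ a, a₀ ≤ a → c ≤ x a) (h : PConvTo p x l) : c ≤ l := by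
  obtain ⟨a₀, hc⟩ := hc
  have : Nonempty (Set.Ici a₀) := ⟨⟨a₀, le_rfl⟩⟩
  exact hclosed.le_of_pConvTo (fun b : Set.Ici a₀ => hc b b.2) (h.comp_Ici a₀)

theorem pConvTo_le [Nonempty A] (hclosed : PClosed p {x : X | 0 ≤ x})
    (hp_neg : ∀ v, p (-v) = p v) (hc : ∀ a, x a ≤ c) (h : PConvTo p x l) : l ≤ c :=
  sub_nonneg.mp <| hclosed A _ _ (fun a => sub_nonneg.mpr (hc a)) (h.const_sub hp_neg c)

theorem isLUB_of_monotone [Nonempty A] (hclosed : PClosed p {x : X | 0 ≤ x})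
    (hp_neg : ∀ v, p (-v) = p v) (hmono : Monotone x) (h : PConvTo p x l) :
    IsLUB (Set.range x) l := by
  refine ⟨?_, fun u hu => hclosed.pConvTo_le hp_neg (fun a => hu ⟨a, rfl⟩) h⟩
  rintro _ ⟨a, rfl⟩
  exact hclosed.le_of_pConvTo_of_eventually ⟨a, fun b hab => hmono hab⟩ h

end PClosed

theorem stmt5_general {X E : Type}
    [AddCommGroup X] [PartialOrder X] [CovariantClass X X (· + ·) (· ≤ ·)] [Module ℝ X]
    [AddCommGroup E] [Lattice E] [Module ℝ E]
    (p : X → E)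
    (hp_smul : ∀ (c : ℝ) (x : X), p (c • x) = |c| • p x)
    (M : ℝ)
    (hsemi : ∀ x y : X, 0 ≤ y → y ≤ x → p y ≤ M • p x)
    (hLevi : PLevi p)
    (hclosed : PClosed p {x : X | 0 ≤ x}) :
    ∀ (A : Type) [Preorder A] [Nonempty A] [IsDirected A (· ≤ ·)] (x : A → X) (z : X),
      (∀ a, 0 ≤ x a) → Monotone x → (∀ a, x a ≤ z) →
      ∃ s : X, IsLUB (Set.range x) s := by
  intro A _ _ _ x z hx_nonneg hmono hxz
  have hp_neg : ∀ v, p (-v) = p v := fun v => by simpa using hp_smul (-1) v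
  have hbdd : ∃ e, ∀ a, p (x a) ≤ e :=
    ⟨M • p z, fun a => hsemi z (x a) (hx_nonneg a) (hxz a)⟩
  obtain ⟨l, hl⟩ := hLevi A x hx_nonneg hmono hbdd
  exact ⟨l, hclosed.isLUB_of_monotone hp_neg hmono hl⟩

/-- a p-semimonotone p-Levi LNOVS with p-closed positive cone is
Dedekind complete: every net `0 ≤ x_α ↑ ≤ z` has a supremum. -/
theorem stmt5 {X E : Type}
    [AddCommGroup X] [PartialOrder X] [CovariantClass X X (· + ·) (· ≤ ·)] [Module ℝ X]
    [AddCommGroup E] [Lattice E] [CovariantClass E E (· + ·) (· ≤ ·)] [Module ℝ E]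
    (p : X → E)
    (hp_nonneg : ∀ x, 0 ≤ p x)
    (hp_zero : ∀ x, p x = 0 ↔ x = 0)
    (hp_smul : ∀ (c : ℝ) (x : X), p (c • x) = |c| • p x)
    (hp_add : ∀ x y, p (x + y) ≤ p x + p y)
    (M : ℝ)
    (hsemi : ∀ x y : X, 0 ≤ y → y ≤ x → p y ≤ M • p x)
    (hLevi : PLevi p)
    (hclosed : PClosed p {x : X | 0 ≤ x}) :
    ∀ (A : Type) [Preorder A] [Nonempty A] [IsDirected A (· ≤ ·)] (x : A → X) (z : X),
      (∀ a, 0 ≤ x a) → Monotone x → (∀ a, x a ≤ z) →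
      ∃ s : X, IsLUB (Set.range x) s :=
  stmt5_general p hp_smul M hsemi hLevi hclosed
end

section
/- Let (𝒴, p, *E) be an internal p-semimonotone lattice-normed ordered vector space with finite semimonotonicity constant 𝓜. Then n(𝒴) = {x ∈ 𝒴 : p(x) ∈ η(*E)} is an order ideal (order-convex subspace) of fin(𝒴) = {x ∈ 𝒴 : p(x) ∈ fin(*E)}: if ξ ≤ κ ≤ ζ with ξ, ζ ∈ n(𝒴) and κ ∈ 𝒴, then κ ∈ n(𝒴). -/
open Filter

/-- The hyperfinite extension filter: we realize the nonstandard extension `*Z` of a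
standard set `Z` as the ultrapower `Germ (hyperfilter ℕ) Z`. -/
notation "γ*" Z => Germ ((hyperfilter ℕ : Ultrafilter ℕ) : Filter ℕ) Z

/-- `fin(*E)`: elements of `*E` dominated by a standard element of `E`. -/
def finE {E : Type} [AddCommGroup E] [Lattice E] : Set (γ* E) :=
  {e | ∃ u : E, |e| ≤ (↑u : γ* E)}

/-- `η(*E)`: elements of `*E` whose set of standard dominants has infimum `0` in `E`. -/
def etaE {E : Type} [AddCommGroup E] [Lattice E] : Set (γ* E) :=
  {e | IsGLB {u : E | |e| ≤ ((↑u : γ* E))} (0 : E)}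

/-!
`η(*E)` is an additive subgroup of `*E` which is solid: `|e| ≤ e'` with `e' ∈ η(*E)` forces
`e ∈ η(*E)`. Since `*q` is sublinear, `n(𝒴)` is its preimage and hence a real subspace.
For order convexity, `0 ≤ κ - ξ ≤ ζ - ξ`, so semimonotonicity gives
`*q (κ - ξ) ≤ 𝓜 • *q (ζ - ξ) ≤ N • *q (ζ - ξ)` for a standard integer `N ≥ 𝓜`, which puts
`κ - ξ`, and therefore `κ`, in `n(𝒴)`.
-/

section Eta

variable {E : Type} [AddCommGroup E] [Lattice E]

theorem neg_mem_etaE {e : γ* E} (h : e ∈ etaE) : -e ∈ etaE := by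
  rwa [etaE, Set.mem_ofPred_eq, abs_neg]

theorem etaE_subset_finE : (etaE : Set (γ* E)) ⊆ finE := by
  intro e he
  by_contra hfin
  -- with no standard dominant, `IsGLB ∅ 0` makes `0` the top element of `E`
  have htop : ∀ b : E, b ≤ 0 := fun b => he.2 fun u hu => (hfin ⟨u, hu⟩).elim
  exact hfin ⟨0, e.inductionOn fun f => Germ.coe_le.2 (.of_forall fun _ => htop _)⟩

variable [IsOrderedAddMonoid E]

theorem mem_etaE_iff {e : γ* E} :
    e ∈ etaE ↔ ∀ b : E, b ∈ lowerBounds {u : E | |e| ≤ (↑u : γ* E)} → b ≤ 0 :=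
  ⟨fun h => h.2, fun h => ⟨fun _ hu => Germ.const_le_iff.1 ((abs_nonneg e).trans hu), h⟩⟩

theorem mem_etaE_of_abs_le {e e' : γ* E} (he' : e' ∈ etaE) (h : |e| ≤ e') : e ∈ etaE :=
  mem_etaE_iff.2 fun _ hb => he'.2 fun _ hu => hb ((h.trans (le_abs_self e')).trans hu)

theorem zero_mem_etaE : (0 : γ* E) ∈ etaE :=
  mem_etaE_iff.2 fun _ hb => hb (show |(0 : γ* E)| ≤ ((0 : E) : γ* E) from abs_zero.le)

theorem add_mem_etaE {e₁ e₂ : γ* E} (h₁ : e₁ ∈ etaE) (h₂ : e₂ ∈ etaE) : e₁ + e₂ ∈ etaE := by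
  refine mem_etaE_iff.2 fun b hb => h₂.2 fun u₂ (hu₂ : |e₂| ≤ (u₂ : γ* E)) => ?_
  have : b - u₂ ∈ lowerBounds {u : E | |e₁| ≤ (↑u : γ* E)} :=
    fun u₁ (hu₁ : |e₁| ≤ (u₁ : γ* E)) =>
      sub_le_iff_le_add.2 (hb ((abs_add_le e₁ e₂).trans (add_le_add hu₁ hu₂ :)))
  exact sub_nonpos.1 (h₁.2 this)

def etaAddSubgroup : AddSubgroup (γ* E) where
  carrier := etaE
  zero_mem' := zero_mem_etaE
  add_mem' := add_mem_etaE
  neg_mem' := neg_mem_etaE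

end Eta

structure IsLatticeSeminorm {Y E : Type} [AddCommGroup Y] [Module ℝ Y]
    [AddCommGroup E] [Lattice E] [Module ℝ E] (q : Y → E) : Prop where
  nonneg : ∀ x, 0 ≤ q x
  map_smul : ∀ (c : ℝ) (x : Y), q (c • x) = |c| • q x
  map_add_le : ∀ x y, q (x + y) ≤ q x + q y

namespace IsLatticeSeminorm

variable {Y E : Type} [AddCommGroup Y] [Module ℝ Y]
  [AddCommGroup E] [Lattice E] [Module ℝ E] {q : Y → E} (hq : IsLatticeSeminorm q)
include hq

theorem map_zero : q 0 = 0 := by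
  simpa using hq.map_smul 0 0

variable [IsOrderedAddMonoid E]

/- The real action on `E` is not assumed monotone; the gap `(N - c) • q x = q ((N - c) • x)`
is nonnegative because it is a value of `q`. -/
theorem smul_le_nsmul_of_le {c : ℝ} {N : ℕ} (h : c ≤ N) (x : Y) : c • q x ≤ N • q x := by
  have hgap : 0 ≤ (N - c) • q x := by
    have := hq.nonneg ((N - c) • x)
    rwa [hq.map_smul, abs_of_nonneg (sub_nonneg.2 h)] at this
  calc c • q x ≤ c • q x + (N - c) • q x := le_add_of_nonneg_right hgap
    _ = N • q x := by rw [← add_smul, add_sub_cancel, Nat.cast_smul_eq_nsmul]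

theorem abs_germMap (x : γ* Y) : |Germ.map q x| = Germ.map q x :=
  abs_of_nonneg (x.inductionOn fun _ => Germ.coe_le.2 (.of_forall fun _ => hq.nonneg _))

theorem germMap_mem_etaE_of_le {x : γ* Y} {e : γ* E} (he : e ∈ etaE) (h : Germ.map q x ≤ e) :
    Germ.map q x ∈ etaE :=
  mem_etaE_of_abs_le he (by rwa [hq.abs_germMap])

/-- The paper's `n(𝒴)`. -/
def nullSubmodule : Submodule ℝ (γ* Y) where
  carrier := {x | Germ.map q x ∈ etaE}
  zero_mem' := hq.germMap_mem_etaE_of_le zero_mem_etaE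
    (Germ.coe_le.2 (.of_forall fun _ => hq.map_zero.le))
  add_mem' {x y} hx hy := hq.germMap_mem_etaE_of_le (add_mem_etaE hx hy)
    (x.inductionOn₂ y fun _ _ => Germ.coe_le.2 (.of_forall fun _ => hq.map_add_le _ _))
  smul_mem' c x hx := hq.germMap_mem_etaE_of_le (etaAddSubgroup.nsmul_mem hx ⌈|c|⌉₊)
    (x.inductionOn fun f => Germ.coe_le.2 (.of_forall fun n =>
      (hq.map_smul c (f n)).trans_le (hq.smul_le_nsmul_of_le (Nat.le_ceil |c|) (f n))))

theorem exists_germMap₂_smul_le_nsmul (𝓜 : γ* ℝ) (h𝓜 : ∃ r : ℝ, |𝓜| ≤ ↑r) :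
    ∃ N : ℕ, ∀ x : γ* Y,
      Germ.map₂ (fun (c : ℝ) (e : E) => c • e) 𝓜 (Germ.map q x) ≤ N • Germ.map q x := by
  obtain ⟨r, hr⟩ := h𝓜
  refine ⟨⌈r⌉₊, fun x => ?_⟩
  induction 𝓜 using Germ.inductionOn with | h m => ?_
  induction x using Germ.inductionOn with | h f => ?_
  have hm : ∀ᶠ n in ((hyperfilter ℕ : Ultrafilter ℕ) : Filter ℕ), m n ≤ r :=
    Germ.coe_le.1 ((le_abs_self _).trans hr)
  exact Germ.coe_le.2 (hm.mono fun _ hn => hq.smul_le_nsmul_of_le (hn.trans (Nat.le_ceil r)) _)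

theorem mem_nullSubmodule_of_le_of_le [PartialOrder Y] [IsOrderedAddMonoid Y] {N : ℕ}
    (hsemi : ∀ κ ξ : γ* Y, 0 ≤ ξ → ξ ≤ κ → Germ.map q ξ ≤ N • Germ.map q κ)
    {ξ κ ζ : γ* Y} (hξ : ξ ∈ hq.nullSubmodule) (hζ : ζ ∈ hq.nullSubmodule)
    (hξκ : ξ ≤ κ) (hκζ : κ ≤ ζ) : κ ∈ hq.nullSubmodule := by
  have hζξ : ζ - ξ ∈ hq.nullSubmodule := sub_mem hζ hξ
  have hκξ : κ - ξ ∈ hq.nullSubmodule :=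
    hq.germMap_mem_etaE_of_le (etaAddSubgroup.nsmul_mem hζξ N)
      (hsemi _ _ (sub_nonneg.2 hξκ) (sub_le_sub_right hκζ ξ))
  simpa using add_mem hκξ hξ

end IsLatticeSeminorm

theorem stmt11_general {Y E : Type}
    [AddCommGroup Y] [PartialOrder Y] [CovariantClass Y Y (· + ·) (· ≤ ·)] [Module ℝ Y]
    [AddCommGroup E] [Lattice E] [CovariantClass E E (· + ·) (· ≤ ·)] [Module ℝ E]
    (q : Y → E)
    (hq_nonneg : ∀ x, 0 ≤ q x)
    (hq_smul : ∀ (c : ℝ) (x : Y), q (c • x) = |c| • q x)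
    (hq_add : ∀ x y, q (x + y) ≤ q x + q y)
    (𝓜 : γ* ℝ) (h𝓜fin : ∃ r : ℝ, |𝓜| ≤ ((↑r : γ* ℝ)))
    (hsemi : ∀ κ ξ : γ* Y, 0 ≤ ξ → ξ ≤ κ →
      Germ.map q ξ ≤ Germ.map₂ (fun (c : ℝ) (e : E) => c • e) 𝓜 (Germ.map q κ)) :
    let nY : Set (γ* Y) := {x | Germ.map q x ∈ etaE}
    let finY : Set (γ* Y) := {x | Germ.map q x ∈ finE}
    nY ⊆ finY ∧
    (0 ∈ nY) ∧ (∀ κ ξ, κ ∈ nY → ξ ∈ nY → κ + ξ ∈ nY) ∧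
    (∀ (c : ℝ) (κ), κ ∈ nY → c • κ ∈ nY) ∧
    (∀ ξ κ ζ : γ* Y, ξ ∈ nY → ζ ∈ nY → ξ ≤ κ → κ ≤ ζ → κ ∈ nY) := by
  let _ : IsOrderedAddMonoid E := { add_le_add_left := fun _ _ h c => add_le_add_left h c }
  let _ : IsOrderedAddMonoid Y := { add_le_add_left := fun _ _ h c => add_le_add_left h c }
  intro nY finY
  have hq : IsLatticeSeminorm q := ⟨hq_nonneg, hq_smul, hq_add⟩
  obtain ⟨N, hN⟩ := hq.exists_germMap₂_smul_le_nsmul 𝓜 h𝓜fin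
  refine ⟨fun _ hx => etaE_subset_finE hx, hq.nullSubmodule.zero_mem,
    fun _ _ => hq.nullSubmodule.add_mem, fun c _ => hq.nullSubmodule.smul_mem c,
    fun _ _ _ => hq.mem_nullSubmodule_of_le_of_le fun κ ξ h₀ h => (hsemi κ ξ h₀ h).trans (hN κ)⟩

/-- for an internal p-semimonotone LNOVS `(*Y, *q, *E)` with finite
semimonotonicity constant `𝓜`, the set `n = {x | *q x ∈ η(*E)}` is an order ideal
(order-convex real subspace) of `fin = {x | *q x ∈ fin(*E)}`. -/
theorem stmt11 {Y E : Type}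
    [AddCommGroup Y] [PartialOrder Y] [CovariantClass Y Y (· + ·) (· ≤ ·)] [Module ℝ Y]
    [AddCommGroup E] [Lattice E] [CovariantClass E E (· + ·) (· ≤ ·)] [Module ℝ E]
    (hE : ∀ S : Set E, S.Nonempty → BddAbove S → ∃ s, IsLUB S s)
    (q : Y → E)
    (hq_nonneg : ∀ x, 0 ≤ q x)
    (hq_zero : ∀ x, q x = 0 ↔ x = 0)
    (hq_smul : ∀ (c : ℝ) (x : Y), q (c • x) = |c| • q x)
    (hq_add : ∀ x y, q (x + y) ≤ q x + q y)
    (𝓜 : γ* ℝ) (h𝓜fin : ∃ r : ℝ, |𝓜| ≤ ((↑r : γ* ℝ)))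
    (hsemi : ∀ κ ξ : γ* Y, 0 ≤ ξ → ξ ≤ κ →
      Germ.map q ξ ≤ Germ.map₂ (fun (c : ℝ) (e : E) => c • e) 𝓜 (Germ.map q κ)) :
    let nY : Set (γ* Y) := {x | Germ.map q x ∈ etaE}
    let finY : Set (γ* Y) := {x | Germ.map q x ∈ finE}
    nY ⊆ finY ∧
    (0 ∈ nY) ∧ (∀ κ ξ, κ ∈ nY → ξ ∈ nY → κ + ξ ∈ nY) ∧
    (∀ (c : ℝ) (κ), κ ∈ nY → c • κ ∈ nY) ∧
    (∀ ξ κ ζ : γ* Y, ξ ∈ nY → ζ ∈ nY → ξ ≤ κ → κ ≤ ζ → κ ∈ nY) :=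
  stmt11_general q hq_nonneg hq_smul hq_add 𝓜 h𝓜fin hsemi
end

section
/- Let (X,p,E) be a p-Levi lattice-normed ordered vector space and (x_α)_{α∈A} a monotone p-bounded net in X⁺. Then for every infinitely large ν ∈ *A, the element x_ν of *X lies in o-pns(*X) = {κ ∈ *X : inf_E{p(κ − x) : x ∈ X} = 0}. -/
open Filter

/- The p-Levi property gives a p-limit `l` of the net, i.e. `p (x α - l)` order-converges to `0`
in `E`. Every upper bound `z` of the order convergence eventually dominates `p (x α - l)`, so by
transfer `*p (x_ν - l) ≤ z` at an infinitely large index `ν`; since these `z` have infimum `0`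
and `p ≥ 0`, the standard dominants of `*p (x_ν - l)` already have infimum `0`. -/

namespace Filter.Germ

variable {ι A β : Type*} {l : Filter ι}

theorem map_le_const_of_forall_ge [Preorder A] [LE β] {f : A → β} {a₀ : A} {b : β}
    (h : ∀ a, a₀ ≤ a → f a ≤ b) {ν : Germ l A} (hν : (↑a₀ : Germ l A) ≤ ν) :
    ν.map f ≤ ↑b := by
  induction ν using Filter.Germ.inductionOn with
  | h g => exact coe_le.mpr ((coe_le.mp hν).mono fun n hn => h (g n) hn)

theorem const_le_map [LE β] {f : A → β} {c : β} (h : ∀ a, c ≤ f a) (ν : Germ l A) :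
    (↑c : Germ l β) ≤ ν.map f := by
  induction ν using Filter.Germ.inductionOn with
  | h g => exact coe_le.mpr (Eventually.of_forall fun n => h (g n))

theorem map_sub_const [AddGroup β] (f : A → β) (c : β) (ν : Germ l A) :
    ν.map f - ↑c = ν.map (fun a => f a - c) := by
  induction ν using Filter.Germ.inductionOn with
  | h g => rfl

end Filter.Germ

theorem OConv0.isGLB_germ_map_le {A G : Type} [Preorder A] [AddCommGroup G] [PartialOrder G]
    {u : A → G} (hu : OConv0 u) (hnonneg : ∀ a, 0 ≤ u a) {ν : γ* A}
    (hν : ∀ a : A, (↑a : γ* A) ≤ ν) :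
    IsGLB {e : G | ν.map u ≤ ↑e} 0 := by
  obtain ⟨D₁, D₂, ⟨y, hy⟩, -, -, -, -, hD₂, hsq⟩ := hu
  refine ⟨fun e he => Germ.const_le_iff.mp ((Germ.const_le_map hnonneg ν).trans he), ?_⟩
  intro b hb
  refine hD₂.2 fun z hz => hb ?_
  obtain ⟨a₀, ha₀⟩ := hsq y hy z hz
  exact Germ.map_le_const_of_forall_ge (fun a ha => (ha₀ a ha).2) (hν a₀)

theorem stmt15_general {X E : Type}
    [AddCommGroup X] [PartialOrder X]
    [AddCommGroup E] [Lattice E]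
    (p : X → E)
    (hp_nonneg : ∀ x, 0 ≤ p x)
    (hLevi : PLevi p)
    {A : Type} [Preorder A] [Nonempty A] [IsDirected A (· ≤ ·)]
    (x : A → X) (hpos : ∀ a, 0 ≤ x a) (hmono : Monotone x)
    (hbdd : ∃ e : E, ∀ a, p (x a) ≤ e)
    (ν : γ* A) (hν : ∀ a : A, (↑a : γ* A) ≤ ν) :
    Filter.Germ.map x ν ∈
      {κ : γ* X | IsGLB {e : E | ∃ x₀ : X,
        Filter.Germ.map p (κ - (↑x₀ : γ* X)) ≤ (↑e : γ* E)} (0 : E)} := by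
  obtain ⟨l, hl⟩ := hLevi A x hpos hmono hbdd
  have hlimit : IsGLB {e : E | ν.map (fun a => p (x a - l)) ≤ ↑e} 0 :=
    OConv0.isGLB_germ_map_le hl (fun a => hp_nonneg _) hν
  refine hlimit.of_subset_of_superset isGLB_Ici ?_ ?_
  · exact fun e he => ⟨l, by rwa [Germ.map_sub_const, Germ.map_map]⟩
  · rintro e ⟨_, he⟩
    exact Germ.const_le_iff.mp ((Germ.const_le_map hp_nonneg _).trans he)

/-- if `(X,p,E)` is p-Levi and `(x_α)_{α ∈ A}` is a monotone p-bounded net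
in `X⁺`, then for every infinitely large `ν ∈ *A` the element `x_ν` of the extended net
belongs to `o-pns(*X) = {κ : inf_E {e : ∃ x ∈ X, *p(κ - x) ≤ e} = 0}`. -/
theorem stmt15 {X E : Type}
    [AddCommGroup X] [PartialOrder X] [CovariantClass X X (· + ·) (· ≤ ·)] [Module ℝ X]
    [AddCommGroup E] [Lattice E] [CovariantClass E E (· + ·) (· ≤ ·)] [Module ℝ E]
    (hE : ∀ S : Set E, S.Nonempty → BddAbove S → ∃ s, IsLUB S s)
    (p : X → E)
    (hp_nonneg : ∀ x, 0 ≤ p x)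
    (hp_zero : ∀ x, p x = 0 ↔ x = 0)
    (hp_smul : ∀ (c : ℝ) (x : X), p (c • x) = |c| • p x)
    (hp_add : ∀ x y, p (x + y) ≤ p x + p y)
    (hLevi : PLevi p)
    {A : Type} [Preorder A] [Nonempty A] [IsDirected A (· ≤ ·)]
    (x : A → X) (hpos : ∀ a, 0 ≤ x a) (hmono : Monotone x)
    (hbdd : ∃ e : E, ∀ a, p (x a) ≤ e)
    (ν : γ* A) (hν : ∀ a : A, (↑a : γ* A) ≤ ν) :
    Filter.Germ.map x ν ∈
      {κ : γ* X | IsGLB {e : E | ∃ x₀ : X,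
        Filter.Germ.map p (κ - (↑x₀ : γ* X)) ≤ (↑e : γ* E)} (0 : E)} :=
  stmt15_general p hp_nonneg hLevi x hpos hmono hbdd ν hν
end
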